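/- Let (x, p, μ) be a deterministic TFM satisfying weak UIC and 2-weak-SCP. Then the confirmed bids are always among the highest: for all users i, j and any bid vector b, if x_i(b) = 1 and x_j(b) = 0 then b_i ≥ b_j. -/

import Mathlib

/-- The 1-strict ("weak") utility of a single transaction with true value `v`,
bid `β`, confirmation indicator `conf ∈ {0,1}`, and payment `pay`: a confirmed
transaction yields `v − pay`, while an unconfirmed overbid of amount `β > v`
costs `β − v`. -/
noncomputable def weakUtil (v β conf pay : ℝ) : ℝ :=
  if conf = 1 then v - pay else -(max (β - v) 0)

/-- The joint 1-strict utility of the coalition of the miner and the users in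
`C` (with true values `v`), when the miner mines a block of `n` slots: slot `s`
carries bid `bids s` and is either a real user's transaction
(`owner s = some u`) or a fake transaction of the miner (`owner s = none`,
true value `0`).  The coalition receives the miner revenue, plus the 1-strict
utility of each coalition-owned transaction and of each fake transaction. -/
noncomputable def weakCoalitionUtility
    (x p : (n : ℕ) → (Fin n → ℝ) → Fin n → ℝ)
    (μ : (n : ℕ) → (Fin n → ℝ) → ℝ)
    (m : ℕ) (v : Fin m → ℝ) (C : Finset (Fin m))
    (n : ℕ) (owner : Fin n → Option (Fin m)) (bids : Fin n → ℝ) : ℝ :=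
  μ n bids + ∑ s : Fin n,
    (match owner s with
     | some u => if u ∈ C then weakUtil (v u) (bids s) (x n bids s) (p n bids s)
                 else 0
     | none => weakUtil 0 (bids s) (x n bids s) (p n bids s))

/-- Weak UIC: assuming the miner is honest, truthful bidding maximizes every
individual user's 1-strict utility. -/
def WeakUIC (x p : (n : ℕ) → (Fin n → ℝ) → Fin n → ℝ) : Prop :=
  ∀ (m : ℕ) (b : Fin m → ℝ) (i : Fin m) (r : ℝ),
    weakUtil (b i) r (x m (Function.update b i r) i) (p m (Function.update b i r) i)
      ≤ weakUtil (b i) (b i) (x m b i) (p m b i)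

/-- `c`-weak-SCP: no coalition of the miner and at least one and at most `c`
users can increase its joint 1-strict utility by any deviation — colluding
users bidding untruthfully, the miner injecting fake transactions, or the
miner assembling an arbitrary block (non-coalition users that are included
appear at most once, with their truthful bids). -/
def WeakSCP (c : ℕ)
    (x p : (n : ℕ) → (Fin n → ℝ) → Fin n → ℝ)
    (μ : (n : ℕ) → (Fin n → ℝ) → ℝ) : Prop :=
  ∀ (m : ℕ) (v : Fin m → ℝ) (C : Finset (Fin m)), C.Nonempty → C.card ≤ c →
    ∀ (n : ℕ) (owner : Fin n → Option (Fin m)) (bids : Fin n → ℝ),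
      (∀ s t u, owner s = some u → owner t = some u → s = t) →
      (∀ s u, owner s = some u → u ∉ C → bids s = v u) →
      weakCoalitionUtility x p μ m v C n owner bids
        ≤ weakCoalitionUtility x p μ m v C m (fun s => some s) v

-- helper: evaluate coalition utility for a permutation-style block
lemma wCU_eval (x p : (n : ℕ) → (Fin n → ℝ) → Fin n → ℝ)
    (μ : (n : ℕ) → (Fin n → ℝ) → ℝ)
    (m : ℕ) (v : Fin m → ℝ) (C : Finset (Fin m))
    (σ : Fin m → Fin m) (bids : Fin m → ℝ) :
    weakCoalitionUtility x p μ m v C m (fun s => some (σ s)) bids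
      = μ m bids + ∑ s : Fin m,
          (if σ s ∈ C then weakUtil (v (σ s)) (bids s) (x m bids s) (p m bids s) else 0) :=
  rfl

lemma sum_single_support {m : ℕ} (i : Fin m) (f : Fin m → ℝ)
    (h : ∀ s, s ≠ i → f s = 0) : (∑ s, f s) = f i :=
  Finset.sum_eq_single_of_mem i (Finset.mem_univ i) (fun s _ hs => h s hs)

lemma sum_pair_support {m : ℕ} {i j : Fin m} (hij : i ≠ j) (f : Fin m → ℝ)
    (h : ∀ s, s ≠ i → s ≠ j → f s = 0) : (∑ s, f s) = f i + f j := by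
  have h1 : (∑ s ∈ ({i, j} : Finset (Fin m)), f s) = ∑ s, f s :=
    Finset.sum_subset (Finset.subset_univ _)
      (fun s _ hs => h s (fun h' => hs (by simp [h'])) (fun h' => hs (by simp [h'])))
  rw [← h1, Finset.sum_pair hij]

/-- **Confirmed bids are the highest bids.**
For a deterministic TFM `(x, p, μ)` satisfying weak UIC and 2-weak-SCP, a
confirmed bid is always at least as high as any unconfirmed bid. -/
theorem weak_uic_scp_confirmed_are_highest
    (x p : (n : ℕ) → (Fin n → ℝ) → Fin n → ℝ)
    (μ : (n : ℕ) → (Fin n → ℝ) → ℝ)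
    (hx01 : ∀ n (b : Fin n → ℝ) (i : Fin n), x n b i = 0 ∨ x n b i = 1)
    (hple : ∀ n (b : Fin n → ℝ) (i : Fin n), x n b i = 1 → p n b i ≤ b i)
    (hp0 : ∀ n (b : Fin n → ℝ) (i : Fin n), x n b i = 0 → p n b i = 0)
    (hμ : ∀ n (b : Fin n → ℝ), 0 ≤ μ n b ∧ μ n b ≤ ∑ i, p n b i)
    (hUIC : WeakUIC x p)
    (hSCP : WeakSCP 2 x p μ) :
    ∀ (m : ℕ) (b : Fin m → ℝ) (i j : Fin m),
      x m b i = 1 → x m b j = 0 → b j ≤ b i := by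
  intro m b i j hxi hxj
  by_contra hlt
  push_neg at hlt
  -- hlt : b i < b j
  have hij : i ≠ j := by
    intro h; rw [h, hxj] at hxi; norm_num at hxi
  set q : ℝ := p m b i with hqdef
  have hq_le : q ≤ b i := hple m b i hxi
  have hq_lt : q < b j := lt_of_le_of_lt hq_le hlt
  set c : Fin m → ℝ := Function.update b i (b j) with hcdef
  have hci : c i = b j := Function.update_self i (b j) b
  have hcs : ∀ s, s ≠ i → c s = b s := fun s hs => Function.update_of_ne hs (b j) b
  have hcj : c j = b j := hcs j (Ne.symm hij)
  have hback : Function.update c i (b i) = b := by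
    funext s
    by_cases hs : s = i
    · subst hs; simp
    · rw [Function.update_of_ne hs, hcs s hs]
  -- Step 1: x c i = 1 and p c i = q
  have hUIC1 := hUIC m c i (b i)
  rw [hback, hci] at hUIC1
  -- hUIC1 : weakUtil (b j) (b i) (x m b i) (p m b i) ≤ weakUtil (b j) (b j) (x m c i) (p m c i)
  have hLHS1 : weakUtil (b j) (b i) (x m b i) (p m b i) = b j - q := by
    rw [weakUtil, if_pos hxi]
  rw [hLHS1] at hUIC1
  have hxc : x m c i = 1 := by
    rcases hx01 m c i with h0 | h1
    · rw [weakUtil, h0] at hUIC1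
      norm_num at hUIC1
      exact absurd hUIC1 (by linarith)
    · exact h1
  have hpc_le : p m c i ≤ q := by
    rw [weakUtil, if_pos hxc] at hUIC1; linarith
  have hpc_ge : q ≤ p m c i := by
    have hUIC2 := hUIC m b i (b j)
    have hupd : Function.update b i (b j) = c := rfl
    rw [hupd] at hUIC2
    rw [weakUtil, if_pos hxc, weakUtil, if_pos hxi] at hUIC2
    linarith
  have hpc : p m c i = q := le_antisymm hpc_le hpc_ge
  -- notation for the key unknown
  set W : ℝ := weakUtil (b j) (b j) (x m c j) (p m c j) with hWdef
  -- Instance (2): C = {i}, values b, bids c  ⇒  μ c ≤ μ b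
  have hμ1 : μ m c ≤ μ m b := by
    have S := hSCP m b {i} (Finset.singleton_nonempty i) (by simp) m
      (fun s => some s) c
      (fun s t u hs ht => by
        simp only [Option.some.injEq] at hs ht; rw [hs, ht])
      (fun s u hs hu => by
        simp only [Option.some.injEq] at hs; subst hs
        exact hcs s (by simpa using hu))
    rw [wCU_eval, wCU_eval] at S
    rw [sum_single_support i _ (fun s hs => if_neg (by simpa using hs)),
        sum_single_support i _ (fun s hs => if_neg (by simpa using hs))] at S
    simp only [Finset.mem_singleton, if_pos rfl] at S
    rw [hci, hpc] at S
    rw [weakUtil, if_pos hxc, weakUtil, if_pos hxi] at S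
    linarith
  -- Instance (3): C = {i}, values c, bids b  ⇒  μ b ≤ μ c
  have hμ2 : μ m b ≤ μ m c := by
    have S := hSCP m c {i} (Finset.singleton_nonempty i) (by simp) m
      (fun s => some s) b
      (fun s t u hs ht => by
        simp only [Option.some.injEq] at hs ht; rw [hs, ht])
      (fun s u hs hu => by
        simp only [Option.some.injEq] at hs; subst hs
        exact (hcs s (by simpa using hu)).symm)
    rw [wCU_eval, wCU_eval] at S
    rw [sum_single_support i _ (fun s hs => if_neg (by simpa using hs)),
        sum_single_support i _ (fun s hs => if_neg (by simpa using hs))] at S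
    simp only [Finset.mem_singleton, if_pos rfl] at S
    rw [hci, hpc] at S
    rw [weakUtil, if_pos hxi, weakUtil, if_pos hxc] at S
    linarith
  -- Instance (4): C = {i, j}, values b, bids c ⇒ W ≤ μ b - μ c = 0
  have hW_le : W ≤ 0 := by
    have S := hSCP m b {i, j} (Finset.insert_nonempty i {j})
      (le_of_eq (Finset.card_pair hij)) m
      (fun s => some s) c
      (fun s t u hs ht => by
        simp only [Option.some.injEq] at hs ht; rw [hs, ht])
      (fun s u hs hu => by
        simp only [Option.some.injEq] at hs; subst hs
        have : s ≠ i := by intro h; exact hu (by simp [h])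
        exact hcs s this)
    rw [wCU_eval, wCU_eval] at S
    have hmi : i ∈ ({i, j} : Finset (Fin m)) := by simp
    have hmj : j ∈ ({i, j} : Finset (Fin m)) := by simp
    have h1 : (∑ s : Fin m, (if s ∈ ({i, j} : Finset (Fin m)) then
        weakUtil (b s) (c s) (x m c s) (p m c s) else 0)) = (b i - q) + W := by
      rw [sum_pair_support hij _ (fun s hsi hsj => if_neg (by simp [hsi, hsj]))]
      rw [if_pos hmi, if_pos hmj, hci, hcj, hpc]
      rw [hWdef, weakUtil, if_pos hxc]
    have h2 : (∑ s : Fin m, (if s ∈ ({i, j} : Finset (Fin m)) then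
        weakUtil (b s) (b s) (x m b s) (p m b s) else 0)) = (b i - q) + 0 := by
      rw [sum_pair_support hij _ (fun s hsi hsj => if_neg (by simp [hsi, hsj]))]
      rw [if_pos hmi, if_pos hmj]
      rw [weakUtil, if_pos hxi, weakUtil, hxj, if_neg (by norm_num)]
      simp
      exact hqdef.symm
    rw [h1, h2] at S
    linarith
  -- Instance (1): C = {j}, values c, swap deviation ⇒ b j - q ≤ W
  have hW_ge : b j - q ≤ W := by
    have S := hSCP m c {j} (Finset.singleton_nonempty j) (by simp) m
      (fun s => some (Equiv.swap i j s)) c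
      (fun s t u hs ht => by
        simp only [Option.some.injEq] at hs ht
        exact (Equiv.swap i j).injective (hs.trans ht.symm)
        )
      (fun s u hs hu => by
        simp only [Option.some.injEq] at hs; subst hs
        by_cases hsi : s = i
        · exact absurd (show Equiv.swap i j s ∈ ({j} : Finset (Fin m)) by
            subst hsi; simp) hu
        · by_cases hsj : s = j
          · subst hsj
            rw [Equiv.swap_apply_right, hcj, hci]
          · rw [Equiv.swap_apply_of_ne_of_ne hsi hsj])
    rw [wCU_eval] at S
    have hRHS : weakCoalitionUtility x p μ m c {j} m (fun s => some s) c
        = μ m c + W := by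
      rw [wCU_eval]
      rw [sum_single_support j _ (fun s hs => if_neg (by simpa using hs))]
      rw [if_pos (Finset.mem_singleton_self j), hcj]
    rw [hRHS] at S
    have hsum : (∑ s : Fin m, (if Equiv.swap i j s ∈ ({j} : Finset (Fin m)) then
        weakUtil (c (Equiv.swap i j s)) (c s) (x m c s) (p m c s) else 0)) = b j - q := by
      rw [sum_single_support i _ (fun s hs => if_neg (by
        simp only [Finset.mem_singleton]
        intro h
        exact hs ((Equiv.swap i j).injective (by rw [h, Equiv.swap_apply_left]))))]
      rw [Equiv.swap_apply_left, if_pos (Finset.mem_singleton_self j), hcj, hci, hpc]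
      rw [weakUtil, if_pos hxc]
    rw [hsum] at S
    linarith
  linarith
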